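/- arXiv:1912.08438 — 3 statements merged into one kernel-verified Lean document; each statement's English description precedes it below -/
import Mathlib

section
/- Let P : ℝ^d → ℝ be a Schwartz function, let P_i(x) := 2^{id} P(2^i x) for i ≥ 0, and let α ≥ 0, a ∈ ℤ. Then for all x ∈ ℝ^d and i ≥ 0, ∫ |P_i(x−y)| |x−y|^α (1+|y|)^{−a} dy ≲ 2^{−iα} (1+|x|)^{−a}, with implicit constant independent of x and i. -/
open MeasureTheory

/-- Peetre-type inequality for real numbers. -/
lemma peetre_aux (a : ℤ) {A B X : ℝ} (hA : 1 ≤ A) (hB : 1 ≤ B) (hX : 1 ≤ X)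
    (h1 : X ≤ A * B) (h2 : B ≤ A * X) :
    B ^ (-a) ≤ A ^ a.natAbs * X ^ (-a) := by
  have hA0 : (0:ℝ) < A := one_pos.trans_le hA
  have hB0 : (0:ℝ) < B := one_pos.trans_le hB
  have hX0 : (0:ℝ) < X := one_pos.trans_le hX
  rcases le_or_gt 0 a with ha | ha
  · obtain ⟨n, rfl⟩ : ∃ n : ℕ, a = n := ⟨a.toNat, (Int.toNat_of_nonneg ha).symm⟩
    simp only [Int.natAbs_natCast, zpow_neg, zpow_natCast]
    have key : X ^ n ≤ A ^ n * B ^ n := by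
      rw [← mul_pow]; exact pow_le_pow_left₀ hX0.le h1 n
    rw [← div_eq_mul_inv, inv_eq_one_div, div_le_div_iff₀ (by positivity) (by positivity),
      one_mul]
    exact key
  · obtain ⟨n, rfl⟩ : ∃ n : ℕ, a = -(n : ℤ) := ⟨(-a).toNat, by omega⟩
    rw [Int.natAbs_neg, Int.natAbs_natCast, neg_neg, zpow_natCast, zpow_natCast, ← mul_pow]
    exact pow_le_pow_left₀ hB0.le h2 n

/-- weighted scaling lemma, Lemma B.1: for a Schwartz function `P`,
`P_i(x) := 2^{id} P(2^i x)`, `α ≥ 0` and `a ∈ ℤ`, one has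
`∫ |P_i(x−y)| |x−y|^α (1+|y|)^{−a} dy ≲ 2^{−iα} (1+|x|)^{−a}` uniformly in `x` and `i`. -/
theorem weighted_scaling (d : ℕ) (P : SchwartzMap (EuclideanSpace ℝ (Fin d)) ℝ)
    (α : ℝ) (hα : 0 ≤ α) (a : ℤ) :
    ∃ C : ℝ, 0 < C ∧ ∀ (i : ℕ) (x : EuclideanSpace ℝ (Fin d)),
      (∫ y : EuclideanSpace ℝ (Fin d),
        (2 : ℝ) ^ ((i : ℝ) * d) * |P ((2 : ℝ) ^ (i : ℝ) • (x - y))| *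
          ‖x - y‖ ^ α * (1 + ‖y‖) ^ (-a)) ≤
      C * (2 : ℝ) ^ (-(i : ℝ) * α) * (1 + ‖x‖) ^ (-a) := by
  classical
  set N : ℕ := ⌈α⌉₊ + a.natAbs with hN
  set G : EuclideanSpace ℝ (Fin d) → ℝ := fun z => |P z| * (1 + ‖z‖) ^ N with hG
  have hGnn : ∀ z, 0 ≤ G z := fun z => by positivity
  -- G is integrable
  have hGint : Integrable G (volume : Measure (EuclideanSpace ℝ (Fin d))) := by
    have hbound : Integrable (fun z : EuclideanSpace ℝ (Fin d) =>
        2 ^ N * (‖P z‖ + ‖z‖ ^ N * ‖P z‖)) (volume : Measure (EuclideanSpace ℝ (Fin d))) :=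
      ((P.integrable.norm.add (P.integrable_pow_mul volume N))).const_mul _
    refine hbound.mono' ?_ ?_
    · exact ((P.continuous.abs).mul
        ((continuous_const.add continuous_norm).pow N)).aestronglyMeasurable
    · refine Filter.Eventually.of_forall fun z => ?_
      have h1 : (1 + ‖z‖) ^ N ≤ 2 ^ N * (1 + ‖z‖ ^ N) := by
        calc (1 + ‖z‖) ^ N ≤ (2 * max 1 ‖z‖) ^ N := by
              refine pow_le_pow_left₀ (by positivity) ?_ N
              rcases le_total ‖z‖ 1 with h | h
              · rw [max_eq_left h]; linarith
              · rw [max_eq_right h]; linarith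
        _ = 2 ^ N * (max 1 ‖z‖) ^ N := mul_pow 2 _ N
        _ ≤ 2 ^ N * (1 + ‖z‖ ^ N) := by
              refine mul_le_mul_of_nonneg_left ?_ (by positivity)
              rcases le_total ‖z‖ 1 with h | h
              · rw [max_eq_left h, one_pow]; linarith [pow_nonneg (norm_nonneg z) N]
              · rw [max_eq_right h]
                nlinarith [pow_nonneg (norm_nonneg z) N]
      have hle : G z ≤ 2 ^ N * (‖P z‖ + ‖z‖ ^ N * ‖P z‖) := by
        calc G z = (1 + ‖z‖) ^ N * |P z| := by rw [hG]; ring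
        _ ≤ 2 ^ N * (1 + ‖z‖ ^ N) * |P z| := mul_le_mul_of_nonneg_right h1 (abs_nonneg _)
        _ = 2 ^ N * (‖P z‖ + ‖z‖ ^ N * ‖P z‖) := by rw [Real.norm_eq_abs]; ring
      calc ‖G z‖ = G z := abs_of_nonneg (hGnn z)
      _ ≤ _ := hle
  have hGint_nonneg : 0 ≤ ∫ z, G z := integral_nonneg hGnn
  refine ⟨(∫ z, G z) + 1, by linarith, fun i x => ?_⟩
  set t : ℝ := (2 : ℝ) ^ (i : ℝ) with ht
  have ht1 : 1 ≤ t := Real.one_le_rpow one_le_two (Nat.cast_nonneg i)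
  have ht0 : 0 < t := lt_of_lt_of_le one_pos ht1
  have hx1 : (1:ℝ) ≤ 1 + ‖x‖ := by linarith [norm_nonneg x]
  have hxz : (0:ℝ) < (1 + ‖x‖) ^ (-a) := by positivity
  set c0 : ℝ := (2 : ℝ) ^ (-(i : ℝ) * α) * (1 + ‖x‖) ^ (-a) with hc0
  have hc0nn : 0 ≤ c0 := by positivity
  set g : EuclideanSpace ℝ (Fin d) → ℝ :=
    fun w => (2 : ℝ) ^ ((i : ℝ) * d) * G (t • w) with hg
  -- pointwise bound
  have hpt : ∀ y : EuclideanSpace ℝ (Fin d),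
      (2 : ℝ) ^ ((i : ℝ) * d) * |P (t • (x - y))| * ‖x - y‖ ^ α * (1 + ‖y‖) ^ (-a) ≤
      c0 * g (x - y) := by
    intro y
    set w : EuclideanSpace ℝ (Fin d) := x - y with hw
    have hnormz : ‖t • w‖ = t * ‖w‖ := by
      rw [norm_smul, Real.norm_eq_abs, abs_of_pos ht0]
    have hwz : ‖w‖ ≤ ‖t • w‖ := by
      rw [hnormz]; nlinarith [norm_nonneg w]
    have h1z : (1:ℝ) ≤ 1 + ‖t • w‖ := by linarith [norm_nonneg (t • w)]
    have hA : ‖w‖ ^ α ≤ (2 : ℝ) ^ (-(i : ℝ) * α) * (1 + ‖t • w‖) ^ (⌈α⌉₊ : ℕ) := by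
      have hweq : ‖w‖ = t⁻¹ * ‖t • w‖ := by
        rw [hnormz]; field_simp
      rw [hweq, Real.mul_rpow (by positivity) (norm_nonneg _)]
      have h2 : (t⁻¹ : ℝ) ^ α = (2 : ℝ) ^ (-(i : ℝ) * α) := by
        rw [ht, ← Real.rpow_neg (by norm_num : (0:ℝ) ≤ 2),
          ← Real.rpow_mul (by norm_num : (0:ℝ) ≤ 2), neg_mul]
      rw [h2]
      have h3 : ‖t • w‖ ^ α ≤ (1 + ‖t • w‖) ^ (⌈α⌉₊ : ℕ) := by
        calc ‖t • w‖ ^ α ≤ (1 + ‖t • w‖) ^ α :=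
              Real.rpow_le_rpow (norm_nonneg _) (by linarith [norm_nonneg (t • w)]) hα
        _ ≤ (1 + ‖t • w‖) ^ ((⌈α⌉₊ : ℕ) : ℝ) :=
              Real.rpow_le_rpow_of_exponent_le h1z (Nat.le_ceil α)
        _ = (1 + ‖t • w‖) ^ (⌈α⌉₊ : ℕ) := Real.rpow_natCast _ _
      exact mul_le_mul_of_nonneg_left h3 (by positivity)
    have hB : (1 + ‖y‖) ^ (-a) ≤ (1 + ‖t • w‖) ^ a.natAbs * (1 + ‖x‖) ^ (-a) := by
      have hy1 : (1:ℝ) ≤ 1 + ‖y‖ := by linarith [norm_nonneg y]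
      have hw1 : (1:ℝ) ≤ 1 + ‖w‖ := by linarith [norm_nonneg w]
      have hxy : ‖x‖ ≤ ‖w‖ + ‖y‖ := by
        calc ‖x‖ = ‖w + y‖ := by rw [hw]; congr 1; abel
        _ ≤ ‖w‖ + ‖y‖ := norm_add_le _ _
      have hyx : ‖y‖ ≤ ‖w‖ + ‖x‖ := by
        calc ‖y‖ = ‖x - w‖ := by rw [hw]; congr 1; abel
        _ ≤ ‖x‖ + ‖w‖ := norm_sub_le _ _
        _ = ‖w‖ + ‖x‖ := by ring
      have p := peetre_aux a (A := 1 + ‖w‖) (B := 1 + ‖y‖) (X := 1 + ‖x‖) hw1 hy1 hx1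
        (by nlinarith [norm_nonneg w, norm_nonneg y])
        (by nlinarith [norm_nonneg w, norm_nonneg x])
      refine p.trans ?_
      refine mul_le_mul_of_nonneg_right ?_ hxz.le
      exact pow_le_pow_left₀ (by positivity) (by linarith) _
    calc (2 : ℝ) ^ ((i : ℝ) * d) * |P (t • w)| * ‖w‖ ^ α * (1 + ‖y‖) ^ (-a)
        ≤ (2 : ℝ) ^ ((i : ℝ) * d) * |P (t • w)| *
            ((2 : ℝ) ^ (-(i : ℝ) * α) * (1 + ‖t • w‖) ^ (⌈α⌉₊ : ℕ)) *
            ((1 + ‖t • w‖) ^ a.natAbs * (1 + ‖x‖) ^ (-a)) := by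
          refine mul_le_mul (mul_le_mul_of_nonneg_left hA (by positivity)) hB
            (by positivity) (by positivity)
    _ = c0 * g w := by
          simp only [hc0, hg, hG, hN, pow_add]; ring
  -- integrability of the majorant
  have hg0 : Integrable (fun y : EuclideanSpace ℝ (Fin d) => G (t • y)) volume :=
    (integrable_comp_smul_iff volume G ht0.ne').mpr hGint
  have hgint : Integrable (fun y : EuclideanSpace ℝ (Fin d) => g (x - y)) volume :=
    (hg0.const_mul ((2:ℝ) ^ ((i : ℝ) * d))).comp_sub_left x
  -- value of the integral of the majorant
  have htd : t ^ d = (2:ℝ) ^ ((i : ℝ) * d) := by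
    rw [ht, ← Real.rpow_natCast ((2:ℝ) ^ (i : ℝ)) d,
      ← Real.rpow_mul (by norm_num : (0:ℝ) ≤ 2)]
  have key : (∫ y : EuclideanSpace ℝ (Fin d), g (x - y)) = ∫ z, G z := by
    rw [integral_sub_left_eq_self g volume x]
    calc (∫ y, g y) = (2:ℝ) ^ ((i : ℝ) * d) * ∫ y, G (t • y) := by
          rw [hg]; exact integral_const_mul _ _
    _ = (2:ℝ) ^ ((i : ℝ) * d) * (|(t ^ Module.finrank ℝ (EuclideanSpace ℝ (Fin d)))⁻¹| • ∫ z, G z) := by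
          rw [Measure.integral_comp_smul volume G t]
    _ = ∫ z, G z := by
          rw [finrank_euclideanSpace_fin, htd, abs_of_pos (by positivity), smul_eq_mul]
          have h2d : (0:ℝ) < (2:ℝ) ^ ((i : ℝ) * d) := Real.rpow_pos_of_pos two_pos _
          field_simp
  -- main estimate
  calc (∫ y : EuclideanSpace ℝ (Fin d),
        (2 : ℝ) ^ ((i : ℝ) * d) * |P (t • (x - y))| * ‖x - y‖ ^ α * (1 + ‖y‖) ^ (-a))
      ≤ ∫ y : EuclideanSpace ℝ (Fin d), c0 * g (x - y) := by
        refine integral_mono_of_nonneg (Filter.Eventually.of_forall fun y => by positivity)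
          (hgint.const_mul c0) (Filter.Eventually.of_forall fun y => hpt y)
  _ = c0 * ∫ y : EuclideanSpace ℝ (Fin d), g (x - y) := integral_const_mul _ _
  _ = c0 * ∫ z, G z := by rw [key]
  _ ≤ c0 * ((∫ z, G z) + 1) := mul_le_mul_of_nonneg_left (by linarith) hc0nn
  _ = ((∫ z, G z) + 1) * (2 : ℝ) ^ (-(i : ℝ) * α) * (1 + ‖x‖) ^ (-a) := by
        rw [hc0]; ring
end

section
/- Let (T^+, Δ^+) satisfy assumption (A): T^+ has a basis 𝓑^+ which is a free commutative monoid on a finite set 𝓑°^+ and the polynomial generators X_1,…,X_d, with Δ^+X_i = X_i⊗𝟏 + 𝟏⊗X_i. Define linear maps D^k on T^+ by the expansion Δ^+τ = Σ_{σ∉𝓑_X^+} σ⊗(τ/^+σ) + Σ_k (X^k/k!) ⊗ D^kτ. Then coassociativity of Δ^+ implies D^k D^ℓ τ = D^{k+ℓ} τ for all multi-indices k, ℓ and all τ ∈ T^+. -/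
/-! Write `L_b` for the coefficient of the basis vector `b` in the left tensor factor, so that
`τ/⁺b = L_b (Δ⁺τ)`. As `Δ⁺` acts on the right factor only, `Δ⁺ ∘ L_b = L_b ∘ (id ⊗ Δ⁺)`, and
coassociativity turns `L_{X^k} (Δ⁺ (L_{X^ℓ} (Δ⁺τ)))` into the coefficient of `X^ℓ ⊗ X^k` in
`(Δ⁺ ⊗ id) Δ⁺τ`. By assumption (A) the only basis element whose coproduct contains `X^ℓ ⊗ X^k` is
`X^{k+ℓ}`, with coefficient `binom(k+ℓ, ℓ)`, and `k! ℓ! binom(k+ℓ, ℓ) = (k+ℓ)!`. -/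

open TensorProduct

variable {d : ℕ} {H : Type*} [CommRing H] [Algebra ℝ H] {β : Type*}

/-- Given a basis `B` of `T⁺` and the coproduct `Δ⁺`, the "right quotient"
`τ/⁺b := (B.coord b ⊗ Id)(Δ⁺τ)`, i.e. the coefficient of the basis element `b` in the left
tensor slot of `Δ⁺τ`. -/
noncomputable def quoOp (B : Module.Basis β ℝ H) (Δ : H →ₐ[ℝ] H ⊗[ℝ] H) (b : β) (τ : H) : H :=
  (TensorProduct.lid ℝ H)
    ((TensorProduct.map (B.coord b) (LinearMap.id : H →ₗ[ℝ] H)) (Δ τ))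

/-- The operator `D^k`, defined by the expansion
`Δ⁺τ = Σ_{σ∉𝓑_X^+} σ⊗(τ/⁺σ) + Σ_k (X^k/k!) ⊗ D^kτ`, i.e.
`D^kτ = k! · (coefficient of X^k in the left slot of Δ⁺τ)`. -/
noncomputable def Dop (B : Module.Basis β ℝ H) (pX : (Fin d →₀ ℕ) → β)
    (Δ : H →ₐ[ℝ] H ⊗[ℝ] H) (k : Fin d →₀ ℕ) (τ : H) : H :=
  (k.prod fun _ n => (n.factorial : ℝ)) • quoOp B Δ (pX k) τ

namespace Finsupp

theorem prod_add_choose_mul_factorial_mul_factorial {ι R : Type*} [Fintype ι] [CommSemiring R]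
    (k ℓ : ι →₀ ℕ) :
    (∏ i, (((k + ℓ) i).choose (ℓ i) : R)) * (k.prod fun _ n => (n.factorial : R)) *
        (ℓ.prod fun _ n => (n.factorial : R)) = (k + ℓ).prod fun _ n => (n.factorial : R) := by
  have hfin (m : ι →₀ ℕ) : (m.prod fun _ n => (n.factorial : R)) = ∏ i, ((m i).factorial : R) :=
    prod_fintype m _ fun _ => by simp
  rw [hfin, hfin, hfin, ← Finset.prod_mul_distrib, ← Finset.prod_mul_distrib]
  refine Finset.prod_congr rfl fun i _ => ?_
  exact_mod_cast congrArg (Nat.cast : ℕ → R)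
    (Nat.add_choose_mul_factorial_mul_factorial (k i) (ℓ i))

end Finsupp

namespace Module.Basis

variable {R V M N ι κ : Type*} [CommSemiring R] [AddCommMonoid V] [Module R V]
  [AddCommMonoid M] [Module R M] [AddCommMonoid N] [Module R N]

noncomputable def leftCoeff (b : Basis ι R V) (i : ι) (M : Type*) [AddCommMonoid M] [Module R M] :
    V ⊗[R] M →ₗ[R] M :=
  (TensorProduct.lid R M).toLinearMap ∘ₗ (b.coord i).rTensor M

@[simp]
theorem leftCoeff_tmul (b : Basis ι R V) (i : ι) (v : V) (m : M) :
    b.leftCoeff i M (v ⊗ₜ m) = b.coord i v • m := by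
  simp [leftCoeff]

theorem comp_leftCoeff (b : Basis ι R V) (i : ι) (f : M →ₗ[R] N) :
    f ∘ₗ b.leftCoeff i M = b.leftCoeff i N ∘ₗ f.lTensor V := by
  ext v m
  simp

theorem leftCoeff_leftCoeff_assoc (b : Basis ι R V) (c : Basis κ R V) (i : ι) (j : κ) :
    c.leftCoeff j M ∘ₗ b.leftCoeff i (V ⊗[R] M) ∘ₗ (TensorProduct.assoc R V V M).toLinearMap =
      (b.tensorProduct c).leftCoeff (i, j) M := by
  ext x y m
  simp [coord_apply, smul_smul, mul_comm]

end Module.Basis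

section Comultiplication

variable {R V ι σ : Type*} [CommSemiring R] [AddCommMonoid V] [Module R V]
  [Fintype σ] [DecidableEq σ] (B : Module.Basis ι R V) {pX : (σ →₀ ℕ) → ι} (Δ : V →ₗ[R] V ⊗[R] V)
  (hinj : Function.Injective pX)
  (hX : ∀ m : σ →₀ ℕ, Δ (B (pX m)) =
    ∑ j ∈ Finset.Iic m, ((∏ i, (m i).choose (j i) : ℕ) : R) • (B (pX j) ⊗ₜ[R] B (pX (m - j))))
include hinj hX

theorem repr_comul_monomial (m j j' : σ →₀ ℕ) :
    (B.tensorProduct B).repr (Δ (B (pX m))) (pX j, pX j') =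
      if m = j + j' then ((∏ i, (m i).choose (j i) : ℕ) : R) else 0 := by
  classical
  rw [hX m, map_sum, Finset.sum_apply']
  simp only [map_smul, Module.Basis.tensorProduct_repr_tmul_apply, Module.Basis.repr_self,
    Finsupp.smul_apply, Finsupp.single_apply, hinj.eq_iff, smul_eq_mul]
  split_ifs with hm
  · subst hm
    rw [Finset.sum_eq_single j]
    · simp
    · intro j₀ _ hj₀
      simp [hj₀]
    · simp
  · refine Finset.sum_eq_zero fun j₀ hj₀ => ?_
    by_cases hj : j₀ = j
    · subst hj
      have hj' : m - j₀ ≠ j' := fun h =>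
        hm (by rw [← h, add_tsub_cancel_of_le (Finset.mem_Iic.mp hj₀)])
      simp [hj']
    · simp [hj]

variable (hNoXX : ∀ b : ι, b ∉ Set.range pX → ∀ k ℓ : σ →₀ ℕ,
    (B.tensorProduct B).repr (Δ (B b)) (pX k, pX ℓ) = 0)
include hNoXX

theorem repr_comul_basis (b : ι) (j j' : σ →₀ ℕ) :
    (B.tensorProduct B).repr (Δ (B b)) (pX j, pX j') =
      ((∏ i, ((j + j') i).choose (j i) : ℕ) : R) * B.coord (pX (j + j')) (B b) := by
  classical
  rw [Module.Basis.coord_apply, Module.Basis.repr_self, Finsupp.single_apply]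
  by_cases hb : b ∈ Set.range pX
  · obtain ⟨m, rfl⟩ := hb
    rw [repr_comul_monomial B Δ hinj hX, hinj.eq_iff]
    split_ifs with hm <;> simp [hm]
  · rw [hNoXX b hb, if_neg fun h => hb ⟨_, h.symm⟩, mul_zero]

theorem leftCoeff_rTensor_comul (M : Type*) [AddCommMonoid M] [Module R M] (j j' : σ →₀ ℕ) :
    (B.tensorProduct B).leftCoeff (pX j, pX j') M ∘ₗ Δ.rTensor M =
      ((∏ i, ((j + j') i).choose (j i) : ℕ) : R) • B.leftCoeff (pX (j + j')) M := by
  refine TensorProduct.ext (B.ext fun b => LinearMap.ext fun m => ?_)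
  simp [Module.Basis.coord_apply, repr_comul_basis B Δ hinj hX hNoXX, mul_smul]

end Comultiplication

theorem quoOp_eq_leftCoeff (B : Module.Basis β ℝ H) (Δ : H →ₐ[ℝ] H ⊗[ℝ] H) (b : β) (τ : H) :
    quoOp B Δ b τ = B.leftCoeff b H (Δ τ) := rfl

theorem quoOp_quoOp (B : Module.Basis β ℝ H) (Δ : H →ₐ[ℝ] H ⊗[ℝ] H)
    (hcoassoc : (TensorProduct.map Δ.toLinearMap (LinearMap.id : H →ₗ[ℝ] H)).comp
        Δ.toLinearMap =
      (TensorProduct.assoc ℝ H H H).symm.toLinearMap.comp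
        ((TensorProduct.map (LinearMap.id : H →ₗ[ℝ] H) Δ.toLinearMap).comp Δ.toLinearMap))
    (b b' : β) (τ : H) :
    quoOp B Δ b' (quoOp B Δ b τ) =
      (B.tensorProduct B).leftCoeff (b, b') H (Δ.toLinearMap.rTensor H (Δ τ)) := by
  have hcoassoc' : Δ.toLinearMap.lTensor H (Δ τ) =
      TensorProduct.assoc ℝ H H H (Δ.toLinearMap.rTensor H (Δ τ)) :=
    ((TensorProduct.assoc ℝ H H H).eq_symm_apply.mp (LinearMap.congr_fun hcoassoc τ)).symm
  calc quoOp B Δ b' (quoOp B Δ b τ)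
      = B.leftCoeff b' H (B.leftCoeff b (H ⊗[ℝ] H) (Δ.toLinearMap.lTensor H (Δ τ))) :=
        congrArg (B.leftCoeff b' H) (LinearMap.congr_fun (B.comp_leftCoeff b Δ.toLinearMap) _)
    _ = B.leftCoeff b' H (B.leftCoeff b (H ⊗[ℝ] H)
          (TensorProduct.assoc ℝ H H H (Δ.toLinearMap.rTensor H (Δ τ)))) := by
        rw [hcoassoc']
    _ = _ := LinearMap.congr_fun (B.leftCoeff_leftCoeff_assoc B b b') _

/-- under assumption (A), coassociativity of `Δ⁺` implies
`D^k D^ℓ τ = D^{k+ℓ} τ` for all multi-indices `k, ℓ` and all `τ ∈ T⁺`. -/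
theorem Dop_comp (B : Module.Basis β ℝ H) (pX : (Fin d →₀ ℕ) → β)
    (hinj : Function.Injective pX) (Δ : H →ₐ[ℝ] H ⊗[ℝ] H)
    (hcoassoc : (TensorProduct.map Δ.toLinearMap (LinearMap.id : H →ₗ[ℝ] H)).comp
        Δ.toLinearMap =
      (TensorProduct.assoc ℝ H H H).symm.toLinearMap.comp
        ((TensorProduct.map (LinearMap.id : H →ₗ[ℝ] H) Δ.toLinearMap).comp Δ.toLinearMap))
    (hX : ∀ m : Fin d →₀ ℕ, Δ (B (pX m)) =
      ∑ j ∈ Finset.Iic m, ((∏ i, (m i).choose (j i) : ℕ) : ℝ) •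
        (B (pX j) ⊗ₜ[ℝ] B (pX (m - j))))
    (hNoXX : ∀ b : β, b ∉ Set.range pX → ∀ k ℓ : Fin d →₀ ℕ,
      (B.tensorProduct B).repr (Δ (B b)) (pX k, pX ℓ) = 0) :
    ∀ (k ℓ : Fin d →₀ ℕ) (τ : H),
      Dop B pX Δ k (Dop B pX Δ ℓ τ) = Dop B pX Δ (k + ℓ) τ := by
  intro k ℓ τ
  have hcoeff := LinearMap.congr_fun
    (leftCoeff_rTensor_comul B Δ.toLinearMap hinj hX hNoXX H ℓ k) (Δ τ)
  rw [LinearMap.comp_apply, LinearMap.smul_apply] at hcoeff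
  rw [Dop, Dop, Dop, quoOp_eq_leftCoeff B Δ (pX k), map_smul, map_smul,
    ← quoOp_eq_leftCoeff, quoOp_quoOp B Δ hcoassoc, hcoeff, quoOp_eq_leftCoeff,
    add_comm ℓ k, smul_smul, smul_smul,
    ← Finsupp.prod_add_choose_mul_factorial_mul_factorial (R := ℝ) k ℓ, Nat.cast_prod]
  congr 1
  ring
end

section
/- Vanishing of the Taylor part in the twisted coproduct: in the BHZ tree Hopf algebra, suppose τ satisfies Δτ = Σ c^τ_{ση} σ⊗η where no η is a nonconstant polynomial X^k (k≠0). Then Δ(ₐI_k^𝔱(τ)) = (ₐI_k^𝔱 ⊗ Id)Δτ + (a term of the form Σ_{ℓ,b,c} (signs and binomials) X^c X^ℓ/ℓ! ⊗ X^{b−c} I_{k+ℓ}^𝔱(X^{a−b}τ)), and in particular the tensor component (ₐI_k^𝔱 ⊗ Id)Δτ contains no terms of the form σ ⊗ X^k with k ≠ 0. Concretely, the combinatorial identity Σ_{σ≤τ, a=c+c'+d+d'} (−1)^{|d+d'|} a!/(c!c'!d!d'!) X^c I_k^𝔱(X^d σ) ⊗ X^{c'}X^{d'}(τ/σ) = (ₐI_k^𝔱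 ⊗ Id)Δτ holds, by the binomial cancellation Σ_{β=c'+d'} (−1)^{|d'|} β!/(c'!d'!) X^{c'}X^{d'} = (X−X)^β = δ_{β,0}. -/
open TensorProduct

variable {d : ℕ} {T : Type*} [CommRing T] [Algebra ℝ T]

/-- The length `|n| = Σ_i n_i` of a multi-index. -/
def mdeg {d : ℕ} (n : Fin d →₀ ℕ) : ℕ := n.sum fun _ j => j

/-- The factorial `n! = ∏_i (n_i)!` of a multi-index. -/
def mfact {d : ℕ} (n : Fin d →₀ ℕ) : ℕ := n.prod fun _ j => j.factorial

/-! Fix the outer index `c ≤ a` and put `b = a - c`. After exchanging the sums over `c'` and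
`d`, the coefficient factors as `a!/(c! c'! d! e!) = binom(a,c) binom(b,d) binom(b-d,c')`, so the
sum over `c'` is the alternating sum `Σ_{c' ≤ β} (-1)^{|β-c'|} binom(β,c') = (1 - 1)^β` with
`β = b - d`, coordinatewise the binomial theorem. It vanishes unless `d = b`, and the surviving
term is the summand `m = c` of `(ₐI_k^𝔱 ⊗ Id)Δτ`. -/

namespace Finset

theorem sum_Iic_sum_Iic_tsub_comm {α M : Type*} [AddCommMonoid α] [PartialOrder α]
    [CanonicallyOrderedAdd α] [Sub α] [OrderedSub α] [AddLeftReflectLE α]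
    [LocallyFiniteOrderBot α] [AddCommMonoid M] (b : α) (f : α → α → M) :
    ∑ x ∈ Iic b, ∑ y ∈ Iic (b - x), f x y = ∑ y ∈ Iic b, ∑ x ∈ Iic (b - y), f x y := by
  refine sum_comm' fun x y => ?_
  simp only [mem_Iic]
  constructor
  · rintro ⟨hx, hy⟩
    have hxy : x + y ≤ b := (le_tsub_iff_left hx).mp hy
    exact ⟨(le_tsub_iff_right (le_add_self.trans hxy)).mpr hxy, le_add_self.trans hxy⟩
  · rintro ⟨hx, hy⟩
    have hxy : x + y ≤ b := (le_tsub_iff_right hy).mp hx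
    exact ⟨le_self_add.trans hxy, (le_tsub_iff_left (le_self_add.trans hxy)).mpr hxy⟩

end Finset

namespace Finsupp

theorem sum_Iic_prod_eq_prod_sum_Iic {ι R : Type*} [Fintype ι] [DecidableEq ι] [CommSemiring R]
    (β : ι →₀ ℕ) (f : ι → ℕ → R) :
    ∑ c ∈ Finset.Iic β, ∏ i, f i (c i) = ∏ i, ∑ j ∈ Finset.Iic (β i), f i j := by
  rw [Finset.prod_univ_sum]
  refine Finset.sum_equiv equivFunOnFinite (fun c => ?_) fun _ _ => rfl
  simp [Finsupp.le_def]

end Finsupp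

def mchoose (a m : Fin d →₀ ℕ) : ℕ := ∏ i, (a i).choose (m i)

theorem mdeg_eq_degree (n : Fin d →₀ ℕ) : mdeg n = n.degree := rfl

theorem mdeg_add (m n : Fin d →₀ ℕ) : mdeg (m + n) = mdeg m + mdeg n := by
  simp only [mdeg_eq_degree, map_add]

theorem mfact_eq_prod (n : Fin d →₀ ℕ) : mfact n = ∏ i, (n i).factorial :=
  Finsupp.prod_fintype _ _ fun _ => Nat.factorial_zero

theorem mfact_ne_zero (n : Fin d →₀ ℕ) : mfact n ≠ 0 := by
  rw [mfact_eq_prod]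
  exact Finset.prod_ne_zero_iff.mpr fun i _ => Nat.factorial_ne_zero _

theorem mchoose_self (a : Fin d →₀ ℕ) : mchoose a a = 1 := by
  simp [mchoose]

theorem mchoose_mul_mfact_mul_mfact {a m : Fin d →₀ ℕ} (h : m ≤ a) :
    mchoose a m * mfact m * mfact (a - m) = mfact a := by
  simp only [mchoose, mfact_eq_prod, ← Finset.prod_mul_distrib, Finsupp.tsub_apply]
  exact Finset.prod_congr rfl fun i _ => Nat.choose_mul_factorial_mul_factorial (h i)

theorem sum_Iic_neg_one_pow_mul_mchoose {R : Type*} [CommRing R] (β : Fin d →₀ ℕ) :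
    ∑ c ∈ Finset.Iic β, (-1 : R) ^ mdeg (β - c) * mchoose β c = 0 ^ mdeg β := by
  have hterm (c : Fin d →₀ ℕ) : (-1 : R) ^ mdeg (β - c) * mchoose β c
      = ∏ i, (-1 : R) ^ (β i - c i) * (β i).choose (c i) := by
    simp [mchoose, mdeg_eq_degree, Finsupp.degree_eq_sum, Finset.prod_mul_distrib,
      Finset.prod_pow_eq_pow_sum]
  have hcoord (n : ℕ) : ∑ j ∈ Finset.Iic n, (-1 : R) ^ (n - j) * n.choose j = 0 ^ n := by
    simpa [← Nat.range_succ_eq_Iic] using (add_pow (1 : R) (-1) n).symm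
  rw [Finset.sum_congr rfl fun c _ => hterm c,
    Finsupp.sum_Iic_prod_eq_prod_sum_Iic β fun i j => (-1 : R) ^ (β i - j) * (β i).choose j]
  simp only [hcoord, Finset.prod_pow_eq_pow_sum, mdeg_eq_degree, Finsupp.degree_eq_sum]

section Resummation

variable {K : Type*} [Field K] [CharZero K]

theorem neg_one_pow_mul_mfact_div_eq {a c c' e : Fin d →₀ ℕ} (hc : c ≤ a) (he : e ≤ a - c)
    (hc' : c' ≤ a - c - e) :
    (-1 : K) ^ mdeg (e + (a - c - c' - e)) *
        (mfact a / (mfact c * mfact c' * mfact e * mfact (a - c - c' - e))) =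
      mchoose a c * ((-1) ^ mdeg e * mchoose (a - c) e) *
        ((-1) ^ mdeg (a - c - e - c') * mchoose (a - c - e) c') := by
  have hfact : (mfact a : K) = mchoose a c * mchoose (a - c) e * mchoose (a - c - e) c' *
      (mfact c * mfact c' * mfact e * mfact (a - c - e - c')) := by
    rw [← mchoose_mul_mfact_mul_mfact hc, ← mchoose_mul_mfact_mul_mfact he,
      ← mchoose_mul_mfact_mul_mfact hc']
    push_cast
    ring
  have hne : (mfact c * mfact c' * mfact e * mfact (a - c - e - c') : K) ≠ 0 := by
    simp [mfact_ne_zero]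
  rw [tsub_right_comm (a := a - c), mdeg_add, pow_add, hfact, mul_div_assoc,
    div_self hne]
  ring

theorem sum_Iic_sum_Iic_multinomial_smul {M : Type*} [AddCommGroup M] [Module K M]
    {a c : Fin d →₀ ℕ} (hc : c ≤ a) (v : (Fin d →₀ ℕ) → M) :
    ∑ c' ∈ Finset.Iic (a - c), ∑ e ∈ Finset.Iic (a - c - c'),
        ((-1 : K) ^ mdeg (e + (a - c - c' - e)) *
          (mfact a / (mfact c * mfact c' * mfact e * mfact (a - c - c' - e)))) • v e =
      (mchoose a c : K) • (-1 : K) ^ mdeg (a - c) • v (a - c) := by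
  rw [Finset.sum_Iic_sum_Iic_tsub_comm]
  calc _ = ∑ e ∈ Finset.Iic (a - c),
        ((mchoose a c * ((-1) ^ mdeg e * mchoose (a - c) e) * 0 ^ mdeg (a - c - e) : K)) • v e := by
        refine Finset.sum_congr rfl fun e he => ?_
        rw [← Finset.sum_smul, Finset.sum_congr rfl fun c' hc' =>
          neg_one_pow_mul_mfact_div_eq hc (Finset.mem_Iic.mp he) (Finset.mem_Iic.mp hc'),
          ← Finset.mul_sum, sum_Iic_neg_one_pow_mul_mchoose]
    _ = ((mchoose a c * ((-1) ^ mdeg (a - c) * mchoose (a - c) (a - c)) *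
          0 ^ mdeg (a - c - (a - c)) : K)) • v (a - c) := by
        refine Finset.sum_eq_single_of_mem _ (Finset.mem_Iic.mpr le_rfl) fun e he hne => ?_
        have hdeg : mdeg (a - c - e) ≠ 0 := by
          rw [mdeg_eq_degree, Ne, Finsupp.degree_eq_zero_iff, tsub_eq_zero_iff_le]
          exact fun h => hne (le_antisymm (Finset.mem_Iic.mp he) h)
        rw [zero_pow hdeg, mul_zero, zero_smul]
    _ = _ := by
        simp only [mchoose_self, tsub_self, mdeg_eq_degree, map_zero, pow_zero, Nat.cast_one,
          mul_one, mul_smul]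

end Resummation

/-- the multinomial resummation identity from the proof of Theorem 4.5.
Given `Δτ = Σ_i σ_i ⊗ η_i`, the fourfold sum
`Σ_{σ≤τ, a=c+c'+dd+d'} (−1)^{|dd+d'|} a!/(c!c'!dd!d'!) X^c I_k^𝔱(X^{dd}σ) ⊗ X^{c'}X^{d'}(τ/σ)`
collapses, by the binomial cancellation `(X−X)^β = δ_{β,0}`, to `(ₐI_k^𝔱 ⊗ Id)Δτ`, where
`ₐI_k^𝔱(σ) = Σ_{m≤a} binom(a,m)(−1)^{|a−m|} X^m I_k^𝔱(X^{a−m}σ)`. -/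
theorem bhz_multinomial_resummation
    (Xp : (Fin d →₀ ℕ) → T) (hX0 : Xp 0 = 1)
    (hXmul : ∀ k ℓ : Fin d →₀ ℕ, Xp k * Xp ℓ = Xp (k + ℓ))
    (I : T →ₗ[ℝ] T) (n : ℕ) (σ η : Fin n → T) (a : Fin d →₀ ℕ) :
    (∑ i : Fin n, ∑ c ∈ Finset.Iic a, ∑ c' ∈ Finset.Iic (a - c),
      ∑ dd ∈ Finset.Iic (a - c - c'),
        ((-1 : ℝ) ^ (mdeg (dd + (a - c - c' - dd))) *
          ((mfact a : ℝ) /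
            ((mfact c : ℝ) * (mfact c' : ℝ) * (mfact dd : ℝ) *
              (mfact (a - c - c' - dd) : ℝ)))) •
          ((Xp c * I (Xp dd * σ i)) ⊗ₜ[ℝ]
            (Xp c' * Xp (a - c - c' - dd) * η i))) =
    ∑ i : Fin n,
      (∑ m ∈ Finset.Iic a, ((∏ i', (a i').choose (m i') : ℕ) : ℝ) •
        (((-1 : ℝ) ^ (mdeg (a - m))) • (Xp m * I (Xp (a - m) * σ i)))) ⊗ₜ[ℝ] η i := by
  refine Finset.sum_congr rfl fun i _ => ?_
  rw [TensorProduct.sum_tmul]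
  refine Finset.sum_congr rfl fun c hc => ?_
  have hX : ∀ c' ∈ Finset.Iic (a - c), ∀ dd ∈ Finset.Iic (a - c - c'),
      Xp c' * Xp (a - c - c' - dd) = Xp (a - c - dd) := fun c' hc' dd hdd => by
    have hsum : dd + c' ≤ a - c :=
      (le_tsub_iff_right (Finset.mem_Iic.mp hc')).mp (Finset.mem_Iic.mp hdd)
    rw [hXmul, tsub_right_comm, add_tsub_cancel_of_le (le_tsub_of_add_le_left hsum)]
  rw [Finset.sum_congr rfl fun c' hc' => Finset.sum_congr rfl fun dd hdd => by
    rw [hX c' hc' dd hdd]]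
  refine (sum_Iic_sum_Iic_multinomial_smul (Finset.mem_Iic.mp hc)
    fun dd => (Xp c * I (Xp dd * σ i)) ⊗ₜ[ℝ] (Xp (a - c - dd) * η i)).trans ?_
  rw [tsub_self, hX0, one_mul, TensorProduct.smul_tmul', TensorProduct.smul_tmul']
  rfl
end
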